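/- arXiv:1309.0888 — 3 statements merged into one kernel-verified Lean document; each statement's English description precedes it below -/
import Mathlib

section
/- For every integer k ≥ 2 and every positive integer s, there exists a graph G such that χ_l(G^k) − χ(G^k) ≥ 3^{3sk−3} − 1; in particular, for any fixed k ≥ 2 the gap χ_l(G^k) − χ(G^k) over all graphs G is unbounded. -/
/-!
Let `2τ + 2 ≤ k ≤ 2τ + 3`. The graph `hubGraph F ι τ` has cube vertices `(r, d) ∈ (ι → F) × F`
and, for `j ∈ ι` and `β, c ∈ F`, a hub whose root lies at distance `τ + 1` from every cube vertex
with `d + β * r j = c`; the paths to the root are shared by the cube vertices of equal level `d`.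
Cube vertices with `r ≠ r'` lie in a common hub, so they are adjacent in `G^k`. The vertices
`(r, d)` and `(r, d')` with `d ≠ d'` are not: they share no hub, a walk of length at most `k`
passes through at most one root, and a walk avoiding the roots preserves the level. So `G^k`
contains the complete multipartite graph with `|F|^|ι|` parts of size `|F|`, while colouring each
cube vertex by `r` and every other vertex by itself is proper and costs only polynomially many
extra colours. For `F = ZMod 3` and `m` parts, no colour lies in all three lists `tripleList u`,
so each part needs two of the `3u` colours and `χ_l(G^k) > 2u ≈ 4m/3`, whereas `χ(G^k) ≈ m`.
-/

open SimpleGraph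

/-- The `k`th power of a graph `G`: two distinct vertices are adjacent iff their
distance in `G` is (finite and) at most `k`. -/
def SimpleGraph.power {V : Type*} (G : SimpleGraph V) (k : ℕ) : SimpleGraph V where
  Adj u v := u ≠ v ∧ G.Reachable u v ∧ G.dist u v ≤ k
  symm := by
    constructor
    rintro u v ⟨h1, h2, h3⟩
    exact ⟨h1.symm, h2.symm, by rwa [SimpleGraph.dist_comm]⟩
  loopless := by
    constructor
    rintro v ⟨h1, -, -⟩
    exact h1 rfl

/-- `G` admits a proper coloring from the lists `L`. -/
def SimpleGraph.Choosable {V : Type*} (G : SimpleGraph V) (L : V → Finset ℕ) : Prop :=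
  ∃ φ : V → ℕ, (∀ v, φ v ∈ L v) ∧ ∀ u v, G.Adj u v → φ u ≠ φ v

/-- The list chromatic number of `G`: the least `t` such that `G` is colorable from
any assignment of lists of size at least `t`. -/
noncomputable def SimpleGraph.listChromaticNumber {V : Type*} (G : SimpleGraph V) : ℕ :=
  sInf {t : ℕ | ∀ L : V → Finset ℕ, (∀ v, t ≤ (L v).card) → G.Choosable L}

/-- The lexicographic product of two graphs. -/
def SimpleGraph.lexProd {V W : Type*} (G : SimpleGraph V) (H : SimpleGraph W) :
    SimpleGraph (V × W) where
  Adj a b := G.Adj a.1 b.1 ∨ (a.1 = b.1 ∧ H.Adj a.2 b.2)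
  symm := by
    constructor
    rintro a b (h | ⟨h1, h2⟩)
    · exact Or.inl h.symm
    · exact Or.inr ⟨h1.symm, h2.symm⟩
  loopless := by
    constructor
    rintro a (h | ⟨-, h2⟩)
    · exact G.irrefl h
    · exact H.irrefl h2

/-- Vertex set `Γ_m`: the vectors in `ℤ_3^m` whose coordinates sum to zero. -/
def GammaVert (m : ℕ) : Type := {z : Fin m → ZMod 3 // ∑ i, z i = 0}

/-- The generator `x_{i,j}`: `1` in coordinate `i`, `2` in coordinate `j`, `0` elsewhere. -/
def xvec (m : ℕ) (i j : Fin m) : Fin m → ZMod 3 :=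
  fun l => if l = i then 1 else if l = j then 2 else 0

/-- The Cayley graph `G_m` on `Γ_m` with connection set `X_m = {x_{i,j} : i ≠ j}`. -/
def Gm (m : ℕ) : SimpleGraph (GammaVert m) where
  Adj y z := ∃ i j : Fin m, i ≠ j ∧ y.1 - z.1 = xvec m i j
  symm := by
    constructor
    rintro y z ⟨i, j, hij, h⟩
    refine ⟨j, i, hij.symm, ?_⟩
    have h' : z.1 - y.1 = -(y.1 - z.1) := by ring
    rw [h', h]
    funext l
    simp only [xvec, Pi.neg_apply]
    by_cases h1 : l = i
    · subst h1
      simp only [if_pos rfl, if_neg hij]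
      decide
    · by_cases h2 : l = j
      · subst h2
        simp only [if_pos rfl, if_neg h1]
        decide
      · simp only [if_neg h1, if_neg h2]
        decide
  loopless := by
    constructor
    rintro y ⟨i, j, hij, h⟩
    have := congrFun h i
    simp [xvec] at this


namespace SimpleGraph

variable {V W : Type*} {G : SimpleGraph V}

theorem Walk.le_add_length {f : V → ℕ} (hf : ∀ u v, G.Adj u v → f u ≤ f v + 1) {u v : V}
    (p : G.Walk u v) : f u ≤ f v + p.length := by
  induction p with
  | nil => simp
  | cons h _ ih => have := hf _ _ h; rw [Walk.length_cons]; omega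

theorem Walk.apply_eq_of_forall_mem_support {β : Type*} {f : V → β} {P : V → Prop}
    (hf : ∀ u v, G.Adj u v → P u → P v → f u = f v) {u v : V} (p : G.Walk u v)
    (hp : ∀ x ∈ p.support, P x) : f u = f v := by
  induction p with
  | nil => rfl
  | cons h p ih =>
    simp only [Walk.support_cons, List.mem_cons, forall_eq_or_imp] at hp
    exact (hf _ _ h hp.1 (hp.2 _ p.start_mem_support)).trans (ih hp.2)

theorem Choosable.comap {H : SimpleGraph W} (f : H →g G) {L : V → Finset ℕ}
    (h : G.Choosable L) : H.Choosable (L ∘ f) := by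
  obtain ⟨φ, hφL, hφ⟩ := h
  exact ⟨φ ∘ f, fun w => hφL (f w), fun u v huv => hφ _ _ (f.map_adj huv)⟩

theorem choosable_of_card_le [Fintype V] (L : V → Finset ℕ)
    (hL : ∀ v, Fintype.card V ≤ (L v).card) : G.Choosable L := by
  have hall : ∀ s : Finset V, s.card ≤ (s.biUnion L).card := by
    intro s
    obtain rfl | ⟨v, hv⟩ := s.eq_empty_or_nonempty
    · simp
    · calc s.card ≤ Fintype.card V := s.card_le_univ
        _ ≤ (L v).card := hL v
        _ ≤ (s.biUnion L).card := Finset.card_le_card (Finset.subset_biUnion_of_mem L hv)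
  obtain ⟨φ, hφ, hφL⟩ := (Finset.all_card_le_biUnion_card_iff_exists_injective L).mp hall
  exact ⟨φ, hφL, fun u v huv heq => G.ne_of_adj huv (hφ heq)⟩

theorem choosable_of_listChromaticNumber_le [Finite V] {L : V → Finset ℕ}
    (hL : ∀ v, G.listChromaticNumber ≤ (L v).card) : G.Choosable L := by
  cases nonempty_fintype V
  have hne : {t : ℕ | ∀ L : V → Finset ℕ, (∀ v, t ≤ (L v).card) → G.Choosable L}.Nonempty :=
    ⟨Fintype.card V, choosable_of_card_le⟩
  exact Nat.sInf_mem hne L hL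

theorem lt_listChromaticNumber_of_hom [Finite V] {H : SimpleGraph W} (f : H →g G)
    (hf : Function.Injective f) {t : ℕ} (L : W → Finset ℕ) (hL : ∀ w, t ≤ (L w).card)
    (h : ¬ H.Choosable L) : t < G.listChromaticNumber := by
  by_contra! hle
  classical
  let L' : V → Finset ℕ := Function.extend f L fun _ => Finset.range t
  have hL' : ∀ v, t ≤ (L' v).card := by
    intro v
    by_cases hv : ∃ w, f w = v
    · obtain ⟨w, rfl⟩ := hv
      simpa [L', hf.extend_apply] using hL w
    · simp [L', Function.extend_apply' _ _ _ hv]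
  have hcomp : L' ∘ f = L := funext fun w => hf.extend_apply L (fun _ => Finset.range t) w
  exact h (hcomp ▸ (choosable_of_listChromaticNumber_le fun v => hle.trans (hL' v)).comap f)


def tripleList (u : ℕ) (i : ZMod 3) : Finset ℕ :=
  Finset.range (3 * u) \ Finset.Ico (i.val * u) (i.val * u + u)

theorem card_tripleList (u : ℕ) (i : ZMod 3) : (tripleList u i).card = 2 * u := by
  have hi : i.val < 3 := ZMod.val_lt i
  have hsub : Finset.Ico (i.val * u) (i.val * u + u) ⊆ Finset.range (3 * u) := by
    intro c hc
    simp only [Finset.mem_Ico, Finset.mem_range] at hc ⊢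
    nlinarith
  rw [tripleList, Finset.card_sdiff_of_subset hsub, Finset.card_range, Nat.card_Ico]
  omega

theorem tripleList_subset_range (u : ℕ) (i : ZMod 3) : tripleList u i ⊆ Finset.range (3 * u) :=
  Finset.sdiff_subset

theorem notMem_tripleList_two {u c : ℕ} (h0 : c ∈ tripleList u 0) (h1 : c ∈ tripleList u 1) :
    c ∉ tripleList u 2 := by
  simp only [tripleList, Finset.mem_sdiff, Finset.mem_range, Finset.mem_Ico] at h0 h1 ⊢
  have v1 : (1 : ZMod 3).val = 1 := rfl
  have v2 : (2 : ZMod 3).val = 2 := rfl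
  simp only [ZMod.val_zero, v1, v2] at h0 h1 ⊢
  omega

theorem completeMultipartiteGraph_not_choosable_tripleList {ι : Type*} [Fintype ι] {u : ℕ}
    (hu : 3 * u < 2 * Fintype.card ι) :
    ¬ (completeMultipartiteGraph fun _ : ι => ZMod 3).Choosable fun v => tripleList u v.2 := by
  rintro ⟨φ, hφL, hφ⟩
  classical
  let T : ι → Finset ℕ := fun a => Finset.univ.image fun i => φ ⟨a, i⟩
  have two_le_card : ∀ a, 2 ≤ (T a).card := by
    intro a
    by_contra! h
    have hT := Finset.card_le_one.mp (Nat.le_of_lt_succ h)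
    have e1 : φ ⟨a, 1⟩ = φ ⟨a, 0⟩ := hT _ (by simp [T]) _ (by simp [T])
    have e2 : φ ⟨a, 2⟩ = φ ⟨a, 0⟩ := hT _ (by simp [T]) _ (by simp [T])
    have h1 := hφL ⟨a, 1⟩
    have h2 := hφL ⟨a, 2⟩
    rw [e1] at h1
    rw [e2] at h2
    exact notMem_tripleList_two (hφL ⟨a, 0⟩) h1 h2
  have disjoint : (↑(Finset.univ : Finset ι) : Set ι).PairwiseDisjoint T := by
    intro a _ b _ hab
    simp only [Function.onFun, T, Finset.disjoint_left, Finset.mem_image]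
    rintro _ ⟨i, -, rfl⟩ ⟨j, -, hj⟩
    exact hφ ⟨a, i⟩ ⟨b, j⟩ (by simpa using hab) hj.symm
  have hsub : Finset.univ.biUnion T ⊆ Finset.range (3 * u) := by
    simp only [Finset.biUnion_subset, T, Finset.image_subset_iff]
    exact fun a _ i _ => tripleList_subset_range u i (hφL ⟨a, i⟩)
  have := Finset.card_le_card hsub
  rw [Finset.card_biUnion disjoint, Finset.card_range] at this
  have := Finset.sum_le_sum fun a (_ : a ∈ Finset.univ) => two_le_card a
  simp only [Finset.sum_const, Finset.card_univ, smul_eq_mul] at this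
  omega

end SimpleGraph

/-- A hub `(j, β, c)` collects the cube vertices `cube r d` with `d + β * r j = c`; they reach
its root through chains of `τ` nodes, one chain for each level `d`. -/
inductive HubVertex (F ι : Type*) (τ : ℕ)
  | cube (r : ι → F) (d : F)
  | chain (j : ι) (β c d : F) (i : Fin τ)
  | root (j : ι) (β c : F)

namespace HubVertex

variable {F ι : Type*} {τ : ℕ}

def equivSum : HubVertex F ι τ ≃ ((ι → F) × F) ⊕ (ι × F × F × F × Fin τ) ⊕ (ι × F × F) where
  toFun
    | cube r d => .inl (r, d)
    | chain j β c d i => .inr (.inl (j, β, c, d, i))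
    | root j β c => .inr (.inr (j, β, c))
  invFun
    | .inl (r, d) => cube r d
    | .inr (.inl (j, β, c, d, i)) => chain j β c d i
    | .inr (.inr (j, β, c)) => root j β c
  left_inv v := by cases v <;> rfl
  right_inv x := by rcases x with _ | _ | _ <;> rfl

instance [Fintype F] [Fintype ι] [DecidableEq ι] : Fintype (HubVertex F ι τ) :=
  Fintype.ofEquiv _ equivSum.symm

section Ring

variable [Ring F]

def Up : HubVertex F ι τ → HubVertex F ι τ → Prop
  | cube r d, chain j β c d' i => i.val = 0 ∧ d' = d ∧ d + β * r j = c
  | cube r d, root j β c => τ = 0 ∧ d + β * r j = c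
  | chain j β c d i, chain j' β' c' d' i' =>
      j' = j ∧ β' = β ∧ c' = c ∧ d' = d ∧ i'.val = i.val + 1
  | chain j β c _ i, root j' β' c' => j' = j ∧ β' = β ∧ c' = c ∧ i.val + 1 = τ
  | _, _ => False

def height : HubVertex F ι τ → ℕ
  | cube .. => 0
  | chain _ _ _ _ i => i.val + 1
  | root .. => τ + 1

theorem height_of_up {u v : HubVertex F ι τ} (h : Up u v) : height v = height u + 1 := by
  cases u <;> cases v <;> simp only [Up, height] at h ⊢ <;> omega

end Ring

end HubVertex

open HubVertex

def hubGraph (F ι : Type*) [Ring F] (τ : ℕ) : SimpleGraph (HubVertex F ι τ) where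
  Adj u v := Up u v ∨ Up v u
  symm := ⟨fun _ _ => Or.symm⟩
  loopless := ⟨fun v h => by rcases h with h | h <;> have := height_of_up h <;> omega⟩

namespace HubVertex

variable {F ι : Type*} {τ k : ℕ}

section Ring

variable [Ring F] {r r' : ι → F} {d d' : F}

def level : HubVertex F ι τ → Option F
  | cube _ d => some d
  | chain _ _ _ d _ => some d
  | root .. => none

def hubKey : HubVertex F ι τ → Option (ι × F × F)
  | cube .. => none
  | chain j β c _ _ => some (j, β, c)
  | root j β c => some (j, β, c)

theorem height_le_of_adj {u v : HubVertex F ι τ} (h : (hubGraph F ι τ).Adj u v) :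
    height u ≤ height v + 1 := by
  rcases h with h | h <;> have := height_of_up h <;> omega

theorem not_adj_cube_cube : ¬ (hubGraph F ι τ).Adj (cube r d) (cube r' d') := by
  simp [hubGraph, Up]

theorem level_eq_of_adj {u v : HubVertex F ι τ} (h : (hubGraph F ι τ).Adj u v)
    (hu : ∀ j β c, u ≠ root j β c) (hv : ∀ j β c, v ≠ root j β c) : level u = level v := by
  rcases h with h | h <;> cases u <;> cases v <;> simp_all [Up, level]

theorem hubKey_eq_of_adj {u v : HubVertex F ι τ} (h : (hubGraph F ι τ).Adj u v)
    {κ : ι × F × F} (hu : hubKey u = some κ) (hv : ∀ r d, v ≠ cube r d) : hubKey v = some κ := by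
  rcases h with h | h <;> cases u <;> cases v <;> simp_all [Up, hubKey]

theorem hub_of_adj_cube {g : HubVertex F ι τ}
    (h : (hubGraph F ι τ).Adj g (cube r d)) {j : ι} {β c : F} (hg : hubKey g = some (j, β, c)) :
    d + β * r j = c := by
  cases g <;> simp_all [hubGraph, Up, hubKey]

theorem exists_walk_cube_chain {j : ι} {β c : F} (h : d + β * r j = c) (i : ℕ) (hi : i < τ) :
    ∃ w : (hubGraph F ι τ).Walk (cube r d) (chain j β c d ⟨i, hi⟩), w.length = i + 1 := by
  induction i with
  | zero =>
    have hadj : (hubGraph F ι τ).Adj (cube r d) (chain j β c d ⟨0, hi⟩) := Or.inl ⟨rfl, rfl, h⟩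
    exact ⟨hadj.toWalk, rfl⟩
  | succ i ih =>
    obtain ⟨w, hw⟩ := ih (by omega)
    have hadj : (hubGraph F ι τ).Adj (chain j β c d ⟨i, by omega⟩) (chain j β c d ⟨i + 1, hi⟩) :=
      Or.inl ⟨rfl, rfl, rfl, rfl, rfl⟩
    exact ⟨w.concat hadj, by rw [Walk.length_concat, hw]⟩

theorem exists_walk_cube_root {j : ι} {β c : F} (h : d + β * r j = c) :
    ∃ w : (hubGraph F ι τ).Walk (cube r d) (root j β c), w.length = τ + 1 := by
  obtain rfl | hτ := Nat.eq_zero_or_pos τ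
  · have hadj : (hubGraph F ι 0).Adj (cube r d) (root j β c) := Or.inl ⟨rfl, h⟩
    exact ⟨hadj.toWalk, rfl⟩
  · obtain ⟨w, hw⟩ := exists_walk_cube_chain (τ := τ) h (τ - 1) (by omega)
    have hadj : (hubGraph F ι τ).Adj (chain j β c d ⟨τ - 1, by omega⟩) (root j β c) :=
      Or.inl ⟨rfl, rfl, rfl, Nat.sub_add_cancel hτ⟩
    exact ⟨w.concat hadj, by rw [Walk.length_concat, hw]; omega⟩

theorem eq_of_walk_cube_cube (w : (hubGraph F ι τ).Walk (cube r d) (cube r' d'))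
    (hw : w.length ≤ 1) : r = r' ∧ d = d' := by
  match w, hw with
  | .nil, _ => exact ⟨rfl, rfl⟩
  | .cons h .nil, _ => exact (not_adj_cube_cube h).elim
  | .cons _ (.cons _ _), hw => simp at hw

/-- A walk from a hub node down to a cube vertex that is at most one step longer than the
height of the node has no time to leave the hub. -/
theorem hub_of_walk_to_cube {j : ι} {β c : F} {g v : HubVertex F ι τ}
    (w : (hubGraph F ι τ).Walk g v) (hv : v = cube r d) (hg : hubKey g = some (j, β, c))
    (hw : w.length ≤ height g + 1) : d + β * r j = c := by
  induction w with
  | nil => subst hv; simp [hubKey] at hg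
  | @cons g v₁ v h w ih =>
    have hgv₁ := height_le_of_adj h
    rw [Walk.length_cons] at hw
    by_cases hv₁ : ∃ r₁ d₁, v₁ = cube r₁ d₁
    · obtain ⟨r₁, d₁, rfl⟩ := hv₁
      subst hv
      obtain ⟨rfl, rfl⟩ := eq_of_walk_cube_cube w (by rw [height] at hgv₁; omega)
      exact hub_of_adj_cube h hg
    · simp only [not_exists] at hv₁
      exact ih hv (hubKey_eq_of_adj h hg hv₁) (by omega)

theorem not_power_adj_cube_cube (hk : k ≤ 2 * τ + 3) (r : ι → F) (hd : d ≠ d') :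
    ¬ ((hubGraph F ι τ).power k).Adj (cube r d) (cube r d') := by
  rintro ⟨-, hreach, hdist⟩
  obtain ⟨w, hw⟩ := hreach.exists_walk_length_eq_dist
  classical
  by_cases hroot : ∃ j β c, root j β c ∈ w.support
  · obtain ⟨j, β, c, hmem⟩ := hroot
    have hlen := congrArg Walk.length (w.take_spec hmem)
    rw [Walk.length_append] at hlen
    set w₁ := w.takeUntil _ hmem
    set w₂ := w.dropUntil _ hmem
    have hw₁ : τ + 1 ≤ w₁.length := by
      simpa [height] using w₁.reverse.le_add_length fun _ _ => height_le_of_adj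
    have hw₂ : τ + 1 ≤ w₂.length := by
      simpa [height] using w₂.le_add_length fun _ _ => height_le_of_adj
    have hc₁ := hub_of_walk_to_cube w₁.reverse rfl rfl (by rw [Walk.length_reverse, height]; omega)
    have hc₂ := hub_of_walk_to_cube w₂ rfl rfl (by rw [height]; omega)
    exact hd (add_right_cancel (hc₁.trans hc₂.symm))
  · simp only [not_exists] at hroot
    have := w.apply_eq_of_forall_mem_support (f := level) (fun _ _ => level_eq_of_adj)
      fun x hx j β c hxr => hroot j β c (hxr ▸ hx)
    exact hd (by simpa [level] using this)

def color : HubVertex F ι τ → (ι → F) ⊕ (ι × F × F × F × Fin τ) ⊕ (ι × F × F)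
  | cube r _ => .inl r
  | chain j β c d i => .inr (.inl (j, β, c, d, i))
  | root j β c => .inr (.inr (j, β, c))

theorem chromaticNumber_power_le [Fintype F] [Fintype ι] [DecidableEq ι]
    (hk : k ≤ 2 * τ + 3) :
    ((hubGraph F ι τ).power k).chromaticNumber.toNat ≤
      Fintype.card F ^ Fintype.card ι +
        Fintype.card ι * Fintype.card F ^ 2 * (Fintype.card F * τ + 1) := by
  have hcol : ((hubGraph F ι τ).power k).Colorable
      (Fintype.card ((ι → F) ⊕ (ι × F × F × F × Fin τ) ⊕ (ι × F × F))) := by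
    refine (Coloring.mk color fun {u v} huv heq => ?_).colorable
    have hne := huv.ne
    cases u <;> cases v <;> simp_all [color]
    exact not_power_adj_cube_cube hk _ hne huv
  refine ENat.toNat_le_of_le_natCast (hcol.chromaticNumber_le.trans (le_of_eq ?_))
  simp only [Fintype.card_sum, Fintype.card_prod, Fintype.card_fun, Fintype.card_fin]
  push_cast
  ring

end Ring

section Field

variable [Field F]

theorem exists_common_hub {r r' : ι → F} (hr : r ≠ r') (d d' : F) :
    ∃ j β, d + β * r j = d' + β * r' j := by
  obtain ⟨j, hj⟩ := Function.ne_iff.mp hr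
  refine ⟨j, (d' - d) / (r j - r' j), ?_⟩
  field_simp [sub_ne_zero.mpr hj]
  ring

theorem power_adj_cube_cube (hk : 2 * τ + 2 ≤ k) {r r' : ι → F} (hr : r ≠ r') (d d' : F) :
    ((hubGraph F ι τ).power k).Adj (cube r d) (cube r' d') := by
  obtain ⟨j, β, hc⟩ := exists_common_hub hr d d'
  obtain ⟨w₁, h₁⟩ := exists_walk_cube_root (τ := τ) (rfl : d + β * r j = _)
  obtain ⟨w₂, h₂⟩ := exists_walk_cube_root (τ := τ) hc.symm
  refine ⟨fun h => hr (by cases h; rfl), (w₁.append w₂.reverse).reachable, ?_⟩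
  calc (hubGraph F ι τ).dist _ _ ≤ (w₁.append w₂.reverse).length := dist_le _
    _ ≤ k := by rw [Walk.length_append, Walk.length_reverse, h₁, h₂]; omega

def cubeHom (hk : 2 * τ + 2 ≤ k) :
    completeMultipartiteGraph (fun _ : ι → F => F) →g (hubGraph F ι τ).power k where
  toFun v := cube v.1 v.2
  map_rel' h := power_adj_cube_cube hk h _ _

theorem cubeHom_injective (hk : 2 * τ + 2 ≤ k) :
    Function.Injective (cubeHom (F := F) (ι := ι) hk) := by
  rintro ⟨r, d⟩ ⟨r', d'⟩ h
  cases h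
  rfl

end Field

theorem lt_listChromaticNumber_power [Fintype ι] [DecidableEq ι] (hk : 2 * τ + 2 ≤ k) {u : ℕ}
    (hu : 3 * u < 2 * 3 ^ Fintype.card ι) :
    2 * u < ((hubGraph (ZMod 3) ι τ).power k).listChromaticNumber :=
  lt_listChromaticNumber_of_hom (cubeHom hk) (cubeHom_injective hk) (fun v => tripleList u v.2)
    (fun v => (card_tripleList u v.2).ge)
    (completeMultipartiteGraph_not_choosable_tripleList (by simpa [Fintype.card_fun] using hu))

end HubVertex

theorem exists_three_pow_ge (a b : ℕ) : ∃ N, 3 ^ a + b * (N + 1) ≤ 3 ^ N := by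
  refine ⟨a + 2 * b + 2, ?_⟩
  have ha : a < 3 ^ a := Nat.lt_pow_self (by norm_num)
  have hb : b < 3 ^ b := Nat.lt_pow_self (by norm_num)
  rw [show 3 ^ (a + 2 * b + 2) = 9 * 3 ^ a * 3 ^ b * 3 ^ b by ring]
  generalize 3 ^ a = A at *
  generalize 3 ^ b = B at *
  have hAB : A ≤ A * B := Nat.le_mul_of_pos_right A (by omega)
  nlinarith [Nat.mul_le_mul hb.le hb.le, Nat.mul_le_mul hb.le ha.le, Nat.mul_le_mul hAB hb.le]

theorem exists_power_gap_ge (k a : ℕ) (hk : 2 ≤ k) :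
    ∃ (V : Type) (_ : Fintype V) (G : SimpleGraph V),
      3 ^ a - 1 ≤ (G.power k).listChromaticNumber - ((G.power k).chromaticNumber).toNat := by
  obtain ⟨τ, hτk, hkτ⟩ : ∃ τ, 2 * τ + 2 ≤ k ∧ k ≤ 2 * τ + 3 := ⟨k / 2 - 1, by omega, by omega⟩
  obtain ⟨N, hN⟩ := exists_three_pow_ge a (27 * k)
  refine ⟨HubVertex (ZMod 3) (Fin (N + 1)) τ, inferInstance, hubGraph _ _ τ, ?_⟩
  have hpow : 3 ^ (N + 1) = 3 * 3 ^ N := by ring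
  have hpos : 0 < 3 ^ N := by positivity
  have hl := lt_listChromaticNumber_power (ι := Fin (N + 1)) (u := 2 * 3 ^ N - 1) hτk
    (by rw [Fintype.card_fin, hpow]; omega)
  have hc := chromaticNumber_power_le (F := ZMod 3) (ι := Fin (N + 1)) hkτ
  simp only [ZMod.card, Fintype.card_fin, hpow] at hc
  have hgadget : (N + 1) * 3 ^ 2 * (3 * τ + 1) ≤ 27 * k * (N + 1) := by
    rw [mul_comm (27 * k), mul_assoc]; exact Nat.mul_le_mul_left _ (by omega)
  omega

/-- For every `k ≥ 2` and positive `s`, there is a graph `G` whose `k`th power has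
`χ_l(G^k) - χ(G^k) ≥ 3^(3sk-3) - 1`; in particular, for any fixed `k ≥ 2` the gap
`χ_l(G^k) - χ(G^k)` over all graphs `G` is unbounded. -/
theorem power_gap_unbounded :
    (∀ k s : ℕ, 2 ≤ k → 1 ≤ s →
      ∃ (V : Type) (_ : Fintype V) (G : SimpleGraph V),
        3 ^ (3 * s * k - 3) - 1 ≤
          (G.power k).listChromaticNumber - ((G.power k).chromaticNumber).toNat) ∧
    (∀ k : ℕ, 2 ≤ k → ∀ N : ℕ,
      ∃ (V : Type) (_ : Fintype V) (G : SimpleGraph V),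
        N ≤ (G.power k).listChromaticNumber - ((G.power k).chromaticNumber).toNat) := by
  refine ⟨fun k s hk _ => exists_power_gap_ge k _ hk, fun k hk N => ?_⟩
  obtain ⟨V, _, G, hG⟩ := exists_power_gap_ge k N hk
  exact ⟨V, inferInstance, G, le_trans (Nat.le_sub_one_of_lt (Nat.lt_pow_self (by norm_num))) hG⟩
end

section
/- Let n ≥ 2 be an integer. For any two vertices y, z of G_{3n}, the distance satisfies d_{G_{3n}}(y, z) ≤ 2n, and d_{G_{3n}}(y, z) = 2n if and only if y − z ∈ {a_{3n}, b_{3n}}, where a_{3n} = (1,1,…,1) and b_{3n} = (2,2,…,2) in Z_3^{3n}. -/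
/-!
Write `w = y - z`, and let `p`, `q` be the numbers of its coordinates equal to `1`, `2`.
Then `3 d(y, z) = max (p + 2q) (2p + q)`, where `p + 2q = ∑ (w l).val` and `2p + q` is the same
sum for `-w`. Each generator has `p + 2q = 3` and the sum is subadditive, which gives `≥`.
For `≤`, some generator always lowers the maximum by exactly `3`: pair a `1` with a `2` if both
occur; otherwise all nonzero coordinates are equal, and since `p ≡ q (mod 3)` there are at
least three of them, so two equal ones can be merged. Finally the maximum is at most `2m`,
with equality only for the constant vectors `1` and `2`.
-/

open SimpleGraph

section ValSum

variable {ι : Type*} [Fintype ι]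

def valSum (w : ι → ZMod 3) : ℕ := ∑ l, (w l).val

def maxValSum (w : ι → ZMod 3) : ℕ := max (valSum w) (valSum (-w))

lemma maxValSum_neg (w : ι → ZMod 3) : maxValSum (-w) = maxValSum w := by
  rw [maxValSum, maxValSum, neg_neg, max_comm]

lemma valSum_eq_zero_iff {w : ι → ZMod 3} : valSum w = 0 ↔ w = 0 := by
  simp only [valSum, Finset.sum_eq_zero_iff, Finset.mem_univ, true_imp_iff, ZMod.val_eq_zero,
    funext_iff, Pi.zero_apply]

lemma valSum_add_le (u v : ι → ZMod 3) : valSum (u + v) ≤ valSum u + valSum v := by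
  rw [valSum, valSum, valSum, ← Finset.sum_add_distrib]
  exact Finset.sum_le_sum fun l _ => ZMod.val_add_le (u l) (v l)

lemma three_dvd_valSum {w : ι → ZMod 3} (hw : ∑ l, w l = 0) : 3 ∣ valSum w := by
  rw [← ZMod.natCast_eq_zero_iff, valSum, Nat.cast_sum]
  simpa only [ZMod.natCast_zmod_val] using hw

lemma valSum_le (w : ι → ZMod 3) : valSum w ≤ 2 * Fintype.card ι := by
  rw [valSum, mul_comm, ← smul_eq_mul, ← Finset.card_univ, ← Finset.sum_const]
  exact Finset.sum_le_sum fun l _ => Nat.le_of_lt_succ (ZMod.val_lt (w l))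

lemma valSum_eq_iff (w : ι → ZMod 3) : valSum w = 2 * Fintype.card ι ↔ w = fun _ => 2 := by
  rw [valSum, mul_comm, ← smul_eq_mul, ← Finset.card_univ, ← Finset.sum_const,
    Finset.sum_eq_sum_iff_of_le fun l _ => Nat.le_of_lt_succ (ZMod.val_lt (w l)), funext_iff]
  have h : ∀ a : ZMod 3, a.val = 2 ↔ a = 2 := by decide
  simp only [Finset.mem_univ, true_imp_iff, h]

lemma maxValSum_le (w : ι → ZMod 3) : maxValSum w ≤ 2 * Fintype.card ι :=
  max_le (valSum_le w) (valSum_le (-w))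

lemma maxValSum_eq_iff (w : ι → ZMod 3) :
    maxValSum w = 2 * Fintype.card ι ↔ (w = fun _ => 1) ∨ w = fun _ => 2 := by
  have hneg : -w = (fun _ => 2) ↔ w = fun _ => 1 := by
    rw [neg_eq_iff_eq_neg, funext_iff, funext_iff]
    exact forall_congr' fun _ => by rw [Pi.neg_apply]; rfl
  rw [← hneg, ← valSum_eq_iff, ← valSum_eq_iff, maxValSum]
  have := valSum_le w
  have := valSum_le (-w)
  omega

end ValSum

section Xvec

variable {m : ℕ} {i j : Fin m}

lemma sum_xvec (hij : i ≠ j) : ∑ l, xvec m i j l = 0 := by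
  simp only [xvec, Finset.sum_ite, Finset.filter_eq', Finset.mem_univ, ↓reduceIte,
    Finset.sum_const, Finset.card_singleton, one_smul, Finset.filter_ne', Finset.mem_erase, ne_eq,
    hij.symm, not_false_eq_true, and_self, smul_zero, add_zero]
  decide

lemma neg_xvec (hij : i ≠ j) : -xvec m i j = xvec m j i := by
  funext l
  simp only [xvec, Pi.neg_apply]
  split_ifs <;> simp_all only [ne_eq, not_true_eq_false, neg_zero] <;> decide

lemma neg_sub_xvec (w : Fin m → ZMod 3) (hij : i ≠ j) :
    -(w - xvec m i j) = -w - xvec m j i := by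
  rw [neg_sub', ← neg_xvec hij, sub_neg_eq_add]

lemma sum_comp_sub_xvec {M : Type*} [AddCommMonoid M] (g : ZMod 3 → M) (w : Fin m → ZMod 3)
    (hij : i ≠ j) :
    ∑ l, g ((w - xvec m i j) l) + g (w i) + g (w j)
      = ∑ l, g (w l) + g (w i - 1) + g (w j + 1) := by
  have hj : j ∈ Finset.univ.erase i := Finset.mem_erase.2 ⟨hij.symm, Finset.mem_univ j⟩
  have hrest : ∀ l ∈ (Finset.univ.erase i).erase j, (w - xvec m i j) l = w l := fun l hl => by
    obtain ⟨hlj, hli, -⟩ := Finset.mem_erase.1 hl |>.imp_right Finset.mem_erase.1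
    simp only [Pi.sub_apply, xvec, hli, hlj, ↓reduceIte, sub_zero]
  have hi' : (w - xvec m i j) i = w i - 1 := by simp [xvec]
  have hj' : (w - xvec m i j) j = w j + 1 := by
    simp only [xvec, Pi.sub_apply, if_neg hij.symm, sub_eq_add_neg]
    rfl
  rw [← Finset.sum_erase_add _ _ (Finset.mem_univ i), ← Finset.sum_erase_add _ _ hj,
    ← Finset.sum_erase_add _ _ (Finset.mem_univ i), ← Finset.sum_erase_add _ _ hj,
    Finset.sum_congr rfl fun l hl => congrArg g (hrest l hl), hi', hj']
  abel

lemma valSum_sub_xvec (w : Fin m → ZMod 3) (hij : i ≠ j) :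
    valSum (w - xvec m i j) + (w i).val + (w j).val
      = valSum w + (w i - 1).val + (w j + 1).val :=
  sum_comp_sub_xvec ZMod.val w hij

lemma valSum_sub_xvec_of_eq_one_of_eq_two {w : Fin m → ZMod 3} (hij : i ≠ j) (hi : w i = 1)
    (hj : w j = 2) : valSum (w - xvec m i j) + 3 = valSum w := by
  have h := valSum_sub_xvec w hij
  rw [hi, hj] at h
  change _ + 1 + 2 = _ + 0 + 0 at h
  omega

lemma valSum_sub_xvec_of_eq_one_of_eq_one {w : Fin m → ZMod 3} (hij : i ≠ j) (hi : w i = 1)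
    (hj : w j = 1) : valSum (w - xvec m i j) = valSum w := by
  have h := valSum_sub_xvec w hij
  rw [hi, hj] at h
  change _ + 1 + 1 = _ + 0 + 2 at h
  omega

lemma valSum_sub_xvec_of_eq_two_of_eq_two {w : Fin m → ZMod 3} (hij : i ≠ j) (hi : w i = 2)
    (hj : w j = 2) : valSum (w - xvec m i j) + 3 = valSum w := by
  have h := valSum_sub_xvec w hij
  rw [hi, hj] at h
  change _ + 2 + 2 = _ + 1 + 0 at h
  omega

lemma valSum_xvec (hij : i ≠ j) : valSum (xvec m i j) = 3 := by
  have h := valSum_sub_xvec_of_eq_one_of_eq_two (w := xvec m i j) hij (by simp [xvec])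
    (by simp [xvec, hij.symm])
  rw [sub_self, valSum_eq_zero_iff.2 rfl, zero_add] at h
  exact h.symm

end Xvec

section Descent

open Finset

variable {m : ℕ} {w : Fin m → ZMod 3}

lemma maxValSum_sub_xvec_of_eq_one_of_eq_two {i j : Fin m} (hij : i ≠ j) (hi : w i = 1)
    (hj : w j = 2) : maxValSum (w - xvec m i j) + 3 = maxValSum w := by
  have h := valSum_sub_xvec_of_eq_one_of_eq_two hij hi hj
  have hneg := valSum_sub_xvec_of_eq_one_of_eq_two (w := -w) hij.symm
    (by rw [Pi.neg_apply, hj]; rfl) (by rw [Pi.neg_apply, hi]; rfl)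
  rw [maxValSum, maxValSum, neg_sub_xvec w hij, ← h, ← hneg, max_add_add_right]

lemma exists_maxValSum_sub_xvec_add_three_of_forall_ne_two (hw : ∑ l, w l = 0) (h0 : w ≠ 0)
    (h2 : ∀ l, w l ≠ 2) :
    ∃ i j, i ≠ j ∧ maxValSum (w - xvec m i j) + 3 = maxValSum w := by
  have hval : ∀ a : ZMod 3, a ≠ 2 → a.val = if a = 1 then 1 else 0 := by decide
  have hval_neg : ∀ a : ZMod 3, a ≠ 2 → (-a).val = 2 * a.val := by decide
  have hcard : valSum w = #{l | w l = 1} := by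
    rw [card_filter, valSum]
    exact sum_congr rfl fun l _ => hval (w l) (h2 l)
  have hneg : valSum (-w) = 2 * valSum w := by
    rw [valSum, valSum, mul_sum]
    exact sum_congr rfl fun l _ => hval_neg (w l) (h2 l)
  have hpos : valSum w ≠ 0 := mt valSum_eq_zero_iff.1 h0
  have h3 : 3 ≤ valSum w := Nat.le_of_dvd (Nat.pos_of_ne_zero hpos) (three_dvd_valSum hw)
  obtain ⟨i, hi, j, hj, hij⟩ := one_lt_card.1 (show 1 < #{l | w l = 1} by omega)
  rw [mem_filter] at hi hj
  have h := valSum_sub_xvec_of_eq_one_of_eq_one hij hi.2 hj.2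
  have h' := valSum_sub_xvec_of_eq_two_of_eq_two (w := -w) hij.symm
    (by rw [Pi.neg_apply, hj.2]; rfl) (by rw [Pi.neg_apply, hi.2]; rfl)
  refine ⟨i, j, hij, ?_⟩
  rw [maxValSum, maxValSum, neg_sub_xvec w hij]
  omega

lemma exists_maxValSum_sub_xvec_add_three (hw : ∑ l, w l = 0) (h0 : w ≠ 0) :
    ∃ i j, i ≠ j ∧ maxValSum (w - xvec m i j) + 3 = maxValSum w := by
  by_cases h12 : ∃ i j, w i = 1 ∧ w j = 2
  · obtain ⟨i, j, hi, hj⟩ := h12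
    have hij : i ≠ j := by rintro rfl; rw [hi] at hj; exact absurd hj (by decide)
    exact ⟨i, j, hij, maxValSum_sub_xvec_of_eq_one_of_eq_two hij hi hj⟩
  push Not at h12
  by_cases h2 : ∀ l, w l ≠ 2
  · exact exists_maxValSum_sub_xvec_add_three_of_forall_ne_two hw h0 h2
  -- Now no coordinate is `1`, so `-w` has no coordinate `2`.
  obtain ⟨k, hk⟩ := not_forall_not.1 h2
  have hneg2 : ∀ l, (-w) l ≠ 2 := fun l hl =>
    h12 l k ((by decide : ∀ a : ZMod 3, -a = 2 → a = 1) _ hl) hk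
  obtain ⟨i, j, hij, h⟩ := exists_maxValSum_sub_xvec_add_three_of_forall_ne_two (w := -w)
    (by simp [sum_neg_distrib, hw]) (neg_ne_zero.2 h0) hneg2
  refine ⟨j, i, hij.symm, ?_⟩
  rwa [← maxValSum_neg (w - xvec m j i), neg_sub_xvec w hij.symm, ← maxValSum_neg w]

end Descent

namespace Gm

variable {m : ℕ}

lemma sum_sub_eq_zero (y z : GammaVert m) : ∑ l, (y.1 - z.1) l = 0 := by
  simp only [Pi.sub_apply, Finset.sum_sub_distrib, y.2, z.2, sub_zero]

lemma exists_adj_sub_xvec (y : GammaVert m) {i j : Fin m} (hij : i ≠ j) :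
    ∃ y' : GammaVert m, (Gm m).Adj y y' ∧ y'.1 = y.1 - xvec m i j := by
  refine ⟨⟨y.1 - xvec m i j, ?_⟩, ⟨i, j, hij, sub_sub_cancel _ _⟩, rfl⟩
  simp only [Pi.sub_apply, Finset.sum_sub_distrib, y.2, sum_xvec hij, sub_zero]

lemma valSum_sub_le_three_mul_length {y z : GammaVert m} (p : (Gm m).Walk y z) :
    valSum (y.1 - z.1) ≤ 3 * p.length := by
  induction p with
  | nil => simp [valSum_eq_zero_iff]
  | @cons a b c hadj q ih =>
    simp only [Walk.length_cons]
    obtain ⟨i, j, hij, hx⟩ := hadj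
    have hsplit : a.1 - c.1 = xvec m i j + (b.1 - c.1) := by rw [← hx]; abel
    have := valSum_add_le (xvec m i j) (b.1 - c.1)
    rw [valSum_xvec hij] at this
    rw [hsplit]
    omega

lemma exists_walk_three_mul_length_le (y z : GammaVert m) :
    ∃ p : (Gm m).Walk y z, 3 * p.length ≤ maxValSum (y.1 - z.1) := by
  induction hk : maxValSum (y.1 - z.1) using Nat.strong_induction_on generalizing y with
  | _ k ih =>
    by_cases hyz : y = z
    · subst hyz
      exact ⟨Walk.nil, by simp⟩
    obtain ⟨i, j, hij, hstep⟩ := exists_maxValSum_sub_xvec_add_three (sum_sub_eq_zero y z)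
      (sub_ne_zero.2 (Subtype.val_injective.ne hyz))
    obtain ⟨y', hadj, hy'⟩ := exists_adj_sub_xvec y hij
    have hdiff : y'.1 - z.1 = y.1 - z.1 - xvec m i j := by rw [hy']; abel
    obtain ⟨p, hp⟩ := ih (maxValSum (y'.1 - z.1)) (by rw [hdiff]; omega) y' rfl
    rw [hdiff] at hp
    exact ⟨Walk.cons hadj p, by rw [Walk.length_cons]; omega⟩

theorem three_mul_dist (y z : GammaVert m) : 3 * (Gm m).dist y z = maxValSum (y.1 - z.1) := by
  obtain ⟨p, hp⟩ := exists_walk_three_mul_length_le y z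
  obtain ⟨q, hq⟩ := (Walk.reachable p).exists_walk_length_eq_dist
  have hlow := valSum_sub_le_three_mul_length q
  have hlow_neg := valSum_sub_le_three_mul_length q.reverse
  rw [Walk.length_reverse, ← neg_sub] at hlow_neg
  have := dist_le p
  rw [maxValSum] at hp ⊢
  omega

end Gm

theorem dist_le_two_n_general (n : ℕ) (y z : GammaVert (3 * n)) :
    (Gm (3 * n)).dist y z ≤ 2 * n ∧
    ((Gm (3 * n)).dist y z = 2 * n ↔
      y.1 - z.1 = (fun _ => 1 : Fin (3 * n) → ZMod 3) ∨
      y.1 - z.1 = (fun _ => 2 : Fin (3 * n) → ZMod 3)) := by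
  have hdist := Gm.three_mul_dist y z
  have hle := maxValSum_le (y.1 - z.1)
  rw [Fintype.card_fin] at hle
  rw [← maxValSum_eq_iff, Fintype.card_fin]
  omega

/-- Let `n ≥ 2`. For any two vertices `y, z` of `G_{3n}`, `d(y,z) ≤ 2n`, and
`d(y,z) = 2n` iff `y - z ∈ {a_{3n}, b_{3n}}` where `a = (1,…,1)`, `b = (2,…,2)`. -/
theorem dist_le_two_n (n : ℕ) (hn : 2 ≤ n) (y z : GammaVert (3 * n)) :
    (Gm (3 * n)).dist y z ≤ 2 * n ∧
    ((Gm (3 * n)).dist y z = 2 * n ↔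
      y.1 - z.1 = (fun _ => 1 : Fin (3 * n) → ZMod 3) ∨
      y.1 - z.1 = (fun _ => 2 : Fin (3 * n) → ZMod 3)) :=
  dist_le_two_n_general n y z
end

section
/- Let n ≥ 2 be an integer, let H_{3n} = G_{3n} □ K_3, let P_i be an equivalence class of the relation ∼ on Γ_{3n} (y ∼ z iff y − z ∈ {0, (1,…,1), (2,…,2)}), and set Q_i = P_i × V(K_3). Then the subgraph of H_{3n}^{2n} induced by Q_i is isomorphic to K_3 □ K_3. -/
open SimpleGraph

/-
Write `1 = (1, …, 1)`. In `G_m` a step changes one coordinate by `+1` and another by `-1`, so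
along a walk from `z` to `z'` with `z - z' = 1` the numbers `a_l`, `b_l` of `+1`'s and `-1`'s in
coordinate `l` satisfy `a_l - b_l ≡ 1 (mod 3)`, whence `2a_l + b_l ≥ 2`; summing over the
coordinates, `3 · length ≥ 2m`. For `m = 3n` the bound `2n` is attained, two steps per block of
three coordinates. So the points of `P = {y, y + 1, y + 2}` lie at mutual distance exactly `2n`
in `G_{3n}`, and since distances add in a box product, in `H_{3n}^{2n}` two points of
`P × V(K_3)` are adjacent iff they differ in exactly one of the two factors.
-/

lemma xvec_eq_single_sub_single {m : ℕ} {i j : Fin m} (hij : i ≠ j) :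
    xvec m i j = Pi.single i 1 - Pi.single j 1 := by
  funext l
  by_cases hi : l = i <;> by_cases hj : l = j <;> simp_all [xvec]
  decide

lemma SimpleGraph.power_adj_iff_edist {V : Type*} {G : SimpleGraph V} {k : ℕ} {u v : V} :
    (G.power k).Adj u v ↔ u ≠ v ∧ G.edist u v ≤ k := by
  refine and_congr_right fun _ => ⟨fun ⟨hr, hd⟩ => ?_, fun h => ?_⟩
  · rw [← hr.coe_dist_eq_edist]
    exact_mod_cast hd
  · have hr := reachable_of_edist_ne_top (ne_top_of_le_ne_top (ENat.natCast_ne_top k) h)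
    rw [← hr.coe_dist_eq_edist] at h
    exact ⟨hr, by exact_mod_cast h⟩

lemma two_le_two_mul_add_of_natCast_sub_eq_one {a b : ℕ} (h : (a : ZMod 3) - b = 1) :
    2 ≤ 2 * a + b := by
  by_contra! hlt
  obtain ⟨rfl, hb⟩ : a = 0 ∧ b ≤ 1 := by omega
  interval_cases b <;> revert h <;> decide

namespace Gm

variable {m : ℕ}

lemma exists_adj_sub (z : GammaVert m) {i j : Fin m} (hij : i ≠ j) :
    ∃ z', (Gm m).Adj z z' ∧ z'.1 = z.1 - xvec m i j := by
  refine ⟨⟨z.1 - xvec m i j, ?_⟩, ⟨i, j, hij, by simp⟩, rfl⟩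
  simp [Finset.sum_sub_distrib, z.2, xvec_eq_single_sub_single hij]

lemma exists_counts_of_walk {z z' : GammaVert m} (w : (Gm m).Walk z z') :
    ∃ A B : Fin m → ℕ, ∑ l, A l = w.length ∧ ∑ l, B l = w.length ∧
      ∀ l, z.1 l - z'.1 l = A l - B l := by
  induction w with
  | nil => exact ⟨0, 0, by simp, by simp, by simp⟩
  | @cons u v w h p ih =>
    have ⟨i, j, hij, hstep⟩ := h
    obtain ⟨A, B, hA, hB, hAB⟩ := ih
    refine ⟨A + Pi.single i 1, B + Pi.single j 1, ?_, ?_, fun l => ?_⟩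
    · show _ = p.length + 1
      simp [Finset.sum_add_distrib, hA]
    · show _ = p.length + 1
      simp [Finset.sum_add_distrib, hB]
    · have hl : u.1 l - v.1 l = (Pi.single i 1 - Pi.single j 1 : Fin m → ZMod 3) l := by
        rw [← xvec_eq_single_sub_single hij, ← hstep, Pi.sub_apply]
      rw [show u.1 l - w.1 l = (u.1 l - v.1 l) + (v.1 l - w.1 l) by ring, hl, hAB l]
      by_cases hi : l = i <;> by_cases hj : l = j <;> simp [hi, hj, Pi.single_apply] <;> ring

lemma two_mul_le_three_mul_length {z z' : GammaVert m} (w : (Gm m).Walk z z')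
    (h : z.1 - z'.1 = 1) : 2 * m ≤ 3 * w.length := by
  obtain ⟨A, B, hA, hB, hAB⟩ := exists_counts_of_walk w
  have hl (l : Fin m) : 2 ≤ 2 * A l + B l :=
    two_le_two_mul_add_of_natCast_sub_eq_one (by rw [← hAB l, ← Pi.sub_apply, h, Pi.one_apply])
  calc 2 * m = ∑ _l : Fin m, 2 := by simp [mul_comm]
    _ ≤ ∑ l, (2 * A l + B l) := Finset.sum_le_sum fun l _ => hl l
    _ = 3 * w.length := by rw [Finset.sum_add_distrib, ← Finset.mul_sum, hA, hB]; ring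

/-- Block by block: `x_{3k,3k+2} + x_{3k+1,3k+2}` is `(1, 1, 1)` on coordinates `3k, 3k+1, 3k+2`. -/
lemma exists_walk_length_of_sub_eq_indicator (k : ℕ) (hk : 3 * k ≤ m) (z z' : GammaVert m)
    (h : ∀ l, z.1 l - z'.1 l = if l.1 < 3 * k then 1 else 0) :
    ∃ w : (Gm m).Walk z z', w.length = 2 * k := by
  induction k generalizing z with
  | zero =>
    obtain rfl : z = z' := Subtype.ext <| funext fun l => sub_eq_zero.1 (by simpa using h l)
    exact ⟨.nil, rfl⟩
  | succ k ih =>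
    set a : Fin m := ⟨3 * k, by omega⟩
    set b : Fin m := ⟨3 * k + 1, by omega⟩
    set c : Fin m := ⟨3 * k + 2, by omega⟩
    obtain ⟨z₁, hz₁, hz₁_eq⟩ := exists_adj_sub z (i := a) (j := c) (by simp [a, c, Fin.ext_iff])
    obtain ⟨z₂, hz₂, hz₂_eq⟩ := exists_adj_sub z₁ (i := b) (j := c) (by simp [b, c, Fin.ext_iff])
    obtain ⟨w, hw⟩ := ih (by omega) z₂ fun l => by
      have hblock : ((if l.1 < 3 * (k + 1) then 1 else 0) - xvec m a c l - xvec m b c l : ZMod 3)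
          = if l.1 < 3 * k then 1 else 0 := by
        simp only [xvec, a, b, c, Fin.ext_iff]
        split_ifs <;> first | decide | omega
      rw [hz₂_eq, Pi.sub_apply, hz₁_eq, Pi.sub_apply]
      linear_combination h l + hblock
    exact ⟨.cons hz₁ (.cons hz₂ w), by simp [hw]; ring⟩

lemma edist_eq_of_sub_eq_one {n : ℕ} {z z' : GammaVert (3 * n)} (h : z.1 - z'.1 = 1) :
    (Gm (3 * n)).edist z z' = 2 * n := by
  obtain ⟨w, hw⟩ := exists_walk_length_of_sub_eq_indicator n le_rfl z z' fun l => by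
    rw [if_pos l.2, ← Pi.sub_apply, h, Pi.one_apply]
  obtain ⟨w', hw'⟩ := (Walk.reachable w).exists_walk_length_eq_edist
  have hlow := two_mul_le_three_mul_length w' h
  refine le_antisymm ((edist_le w).trans (by simp [hw])) ?_
  rw [← hw']
  exact_mod_cast (by omega : 2 * n ≤ w'.length)

lemma edist_eq_of_sub_eq_const {n : ℕ} {z z' : GammaVert (3 * n)} {e : ZMod 3}
    (h : z.1 - z'.1 = fun _ => e) :
    (Gm (3 * n)).edist z z' = if e = 0 then 0 else 2 * n := by
  rcases (by decide : ∀ e : ZMod 3, e = 0 ∨ e = 1 ∨ e = 2) e with rfl | rfl | rfl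
  · obtain rfl : z = z' := Subtype.ext (sub_eq_zero.1 h)
    simp
  · exact edist_eq_of_sub_eq_one h
  · rw [SimpleGraph.edist_comm]
    refine edist_eq_of_sub_eq_one ?_
    rw [← neg_sub, h]
    funext
    exact (by decide : -2 = (1 : ZMod 3))

end Gm

namespace GammaVert

variable {n : ℕ}

def addConst (z : GammaVert (3 * n)) (c : ZMod 3) : GammaVert (3 * n) :=
  ⟨z.1 + fun _ => c, by simp [Finset.sum_add_distrib, z.2, show (3 : ZMod 3) = 0 from rfl]⟩

lemma addConst_injective (hn : 0 < n) (z : GammaVert (3 * n)) :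
    Function.Injective z.addConst := fun c c' h => by
  simpa [addConst] using congrFun (congrArg Subtype.val h) ⟨0, by omega⟩

lemma addConst_sub_addConst (z : GammaVert (3 * n)) (c c' : ZMod 3) :
    (z.addConst c).1 - (z.addConst c').1 = fun _ => c - c' := by
  funext
  simp [addConst]

lemma eq_addConst_iff {y z : GammaVert (3 * n)} {c : ZMod 3} :
    z = y.addConst c ↔ z.1 - y.1 = fun _ => c := by
  refine ⟨fun h => ?_, fun h => Subtype.ext ?_⟩
  · subst h
    funext
    simp [addConst]
  · show z.1 = y.1 + fun _ => c
    rw [← h]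
    abel

end GammaVert

/-- `c ↦ y + (c, …, c)` parametrises the class of `y` under `∼`. -/
def classEmbedding {n : ℕ} (hn : 0 < n) (y : GammaVert (3 * n)) :
    (⊤ : SimpleGraph (ZMod 3)).boxProd (⊤ : SimpleGraph (Fin 3)) ↪g
      ((Gm (3 * n)).boxProd (⊤ : SimpleGraph (Fin 3))).power (2 * n) where
  toFun p := (y.addConst p.1, p.2)
  inj' := (y.addConst_injective hn).prodMap Function.injective_id
  map_rel_iff' {p q} := by
    rw [power_adj_iff_edist, edist_boxProd]
    simp only [Function.Embedding.coeFn_mk]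
    rw [Gm.edist_eq_of_sub_eq_const (y.addConst_sub_addConst p.1 q.1), edist_top, boxProd_adj]
    simp only [top_adj, ne_eq, Prod.ext_iff, (y.addConst_injective hn).eq_iff, sub_eq_zero]
    by_cases hc : p.1 = q.1 <;> by_cases ht : p.2 = q.2 <;> simp [hc, ht] <;> norm_cast <;> omega

lemma range_classEmbedding {n : ℕ} (hn : 0 < n) (y : GammaVert (3 * n)) :
    Set.range (classEmbedding hn y) = {p : GammaVert (3 * n) × Fin 3 |
      p.1.1 - y.1 = 0 ∨ p.1.1 - y.1 = (fun _ => 1 : Fin (3 * n) → ZMod 3) ∨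
        p.1.1 - y.1 = (fun _ => 2 : Fin (3 * n) → ZMod 3)} := by
  ext ⟨z, t⟩
  simp only [Set.mem_range, Set.mem_ofPred_eq, classEmbedding, RelEmbedding.coe_mk,
    Function.Embedding.coeFn_mk, Prod.mk.injEq, Prod.exists, exists_eq_right, eq_comm (b := z),
    GammaVert.eq_addConst_iff]
  constructor
  · rintro ⟨c, hc⟩
    rcases (by decide : ∀ e : ZMod 3, e = 0 ∨ e = 1 ∨ e = 2) c with rfl | rfl | rfl
    exacts [Or.inl hc, Or.inr (Or.inl hc), Or.inr (Or.inr hc)]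
  · rintro (h | h | h) <;> exact ⟨_, h⟩

/-- Let `n ≥ 2` and `H_{3n} = G_{3n} □ K_3`. For an equivalence class `P` of `∼` on
`Γ_{3n}` (the class of a vertex `y`), the subgraph of `H_{3n}^(2n)` induced by
`Q = P × V(K_3)` is isomorphic to `K_3 □ K_3`. -/
theorem induced_subgraph_iso (n : ℕ) (hn : 2 ≤ n) (y : GammaVert (3 * n)) :
    Nonempty
      (((((Gm (3 * n)).boxProd (⊤ : SimpleGraph (Fin 3))).power (2 * n)).induce
          {p : GammaVert (3 * n) × Fin 3 |
            p.1.1 - y.1 = 0 ∨ p.1.1 - y.1 = (fun _ => 1 : Fin (3 * n) → ZMod 3) ∨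
              p.1.1 - y.1 = (fun _ => 2 : Fin (3 * n) → ZMod 3)}) ≃g
        ((⊤ : SimpleGraph (Fin 3)).boxProd (⊤ : SimpleGraph (Fin 3)))) := by
  rw [← range_classEmbedding (by omega) y]
  -- `ZMod 3` is `Fin 3` by definition
  exact ⟨(classEmbedding (by omega) y).isoInduceRange.symm⟩
end
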